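/- arXiv:1901.01014 — 9 statements merged into one kernel-verified Lean document; each statement's English description precedes it below -/
import Mathlib

section
/- In an enhanced Leibniz algebra, for every u, v ∈ V and w, w' ∈ W one has (1) t(w) ∘ˢ t(w') = 0; (2) u ∘ˢ [v, t(w)] = v ∘ˢ [u, t(w)] + t(w) ∘ˢ [u,v]; (3) [v, t(w)] = 2 t(v ∘ˢ t(w)). -/
/-!
All three identities come from polarizing the defining axioms along `v ↦ v + t w`, using that
`t w` is a left annihilator of the bracket. Polarizing `t w ∘ t w = 0` gives (1); subtracting
axiom (c) at `(u, v)` from axiom (c) at `(u, v + t w)` gives (2), once axiom (c) at `(u, t w)`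
has killed the term `t w ∘ˢ [u, t w]`; polarizing axiom (d) gives (3).
-/

section Polarization

variable {R V W : Type*} [CommRing R] [AddCommGroup V] [Module R V]
  [AddCommGroup W] [Module R W]

theorem apply_bracket_eq_of_forall_bracket_eq_zero
    (br : V →ₗ[R] V →ₗ[R] V) (B : V →ₗ[R] V →ₗ[R] W)
    (hB : ∀ u v : V, B u (br v v) = B v (br u v))
    {x : V} (hx : ∀ y : V, br x y = 0) (u v : V) :
    B u (br v x) = B v (br u x) + B x (br u v) := by
  have hxx : B x (br u x) = 0 := by simpa only [hx, map_zero] using (hB u x).symm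
  have h := hB u (v + x)
  simp only [map_add, LinearMap.add_apply, hx, add_zero] at h
  linear_combination (norm := module) h - hB u v + hxx

theorem bracket_eq_of_forall_bracket_eq_zero
    (t : W →ₗ[R] V) (br : V →ₗ[R] V →ₗ[R] V) (c : V →ₗ[R] V →ₗ[R] W)
    (hbr : ∀ v : V, br v v = t (c v v))
    {x : V} (hx : ∀ y : V, br x y = 0) (hxx : c x x = 0) (v : V) :
    br v x = t (c v x + c x v) := by
  have h := hbr (v + x)
  simp only [map_add, LinearMap.add_apply, hx, hxx, add_zero, hbr v] at h
  rw [map_add]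
  linear_combination (norm := module) h

end Polarization

theorem ela_corollary_general
    {K : Type*} [Field K] (h2 : (2 : K) ≠ 0)
    {V W : Type*} [AddCommGroup V] [Module K V] [AddCommGroup W] [Module K W]
    (t : W →ₗ[K] V) (br : V →ₗ[K] V →ₗ[K] V) (c : V →ₗ[K] V →ₗ[K] W)
    (axa : ∀ (w : W) (v : V), br (t w) v = 0)
    (axb : ∀ w : W, c (t w) (t w) = 0)
    (axc : ∀ u v : V, (2 : K)⁻¹ • (c u (br v v) + c (br v v) u)
            = (2 : K)⁻¹ • (c v (br u v) + c (br u v) v))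
    (axd : ∀ v : V, br v v = t (c v v)) :
    (∀ w w' : W, (2 : K)⁻¹ • (c (t w) (t w') + c (t w') (t w)) = 0) ∧
    (∀ (u v : V) (w : W),
        (2 : K)⁻¹ • (c u (br v (t w)) + c (br v (t w)) u)
          = (2 : K)⁻¹ • (c v (br u (t w)) + c (br u (t w)) v)
            + (2 : K)⁻¹ • (c (t w) (br u v) + c (br u v) (t w))) ∧
    (∀ (v : V) (w : W),
        br v (t w) = (2 : K) • t ((2 : K)⁻¹ • (c v (t w) + c (t w) v))) := by
  have hAlt : (c.compl₁₂ t t).IsAlt := axb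
  have hsym (u v : V) :
      ((2 : K)⁻¹ • (c + c.flip)) u v = (2 : K)⁻¹ • (c u v + c v u) := rfl
  refine ⟨fun w w' => ?_, fun u v w => ?_, fun v w => ?_⟩
  · have h := hAlt.neg w w'
    rw [LinearMap.compl₁₂_apply, LinearMap.compl₁₂_apply, neg_eq_iff_add_eq_zero] at h
    rw [h, smul_zero]
  · simpa only [hsym] using apply_bracket_eq_of_forall_bracket_eq_zero br
      ((2 : K)⁻¹ • (c + c.flip)) (by simpa only [hsym] using axc) (axa w) u v
  · rw [map_smul, smul_smul, mul_inv_cancel₀ h2, one_smul]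
    exact bracket_eq_of_forall_bracket_eq_zero t br c axd (axa w) (axb w) v

/-- Consequences of the polarization identities in an enhanced Leibniz algebra. -/
theorem ela_corollary
    {K : Type*} [Field K] (h2 : (2 : K) ≠ 0)
    {V W : Type*} [AddCommGroup V] [Module K V] [AddCommGroup W] [Module K W]
    (t : W →ₗ[K] V) (br : V →ₗ[K] V →ₗ[K] V) (c : V →ₗ[K] V →ₗ[K] W)
    (leib : ∀ v₁ v₂ v₃ : V, br v₁ (br v₂ v₃) = br (br v₁ v₂) v₃ + br v₂ (br v₁ v₃))
    (axa : ∀ (w : W) (v : V), br (t w) v = 0)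
    (axb : ∀ w : W, c (t w) (t w) = 0)
    (axc : ∀ u v : V, (2 : K)⁻¹ • (c u (br v v) + c (br v v) u)
            = (2 : K)⁻¹ • (c v (br u v) + c (br u v) v))
    (axd : ∀ v : V, br v v = t (c v v)) :
    (∀ w w' : W, (2 : K)⁻¹ • (c (t w) (t w') + c (t w') (t w)) = 0) ∧
    (∀ (u v : V) (w : W),
        (2 : K)⁻¹ • (c u (br v (t w)) + c (br v (t w)) u)
          = (2 : K)⁻¹ • (c v (br u (t w)) + c (br u (t w)) v)
            + (2 : K)⁻¹ • (c (t w) (br u v) + c (br u v) (t w))) ∧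
    (∀ (v : V) (w : W),
        br v (t w) = (2 : K) • t ((2 : K)⁻¹ • (c v (t w) + c (t w) v))) :=
  ela_corollary_general h2 t br c axa axb axc axd
end

section
/- If (t : W → V, [·,·], ∘) is a symmetric enhanced Leibniz algebra whose underlying Leibniz bracket is a Lie bracket (i.e. [v,v] = 0 for all v ∈ V), then the symmetric bilinear form ∘ with values in W is invariant under the Lie algebra (V,[·,·]): for all v, v', v'' ∈ V one has v ∘ [v',v''] = [v,v'] ∘ v''. -/
/-!
Since `∘` is symmetric and `[v,v] = 0`, axiom (c) collapses to `v ∘ [u,v] = 0`: for each `u`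
the form `(v, w) ↦ v ∘ [u,w]` is alternating, hence antisymmetric. Combined with the
antisymmetry of the bracket and the symmetry of `∘` this is invariance.
-/

section

variable {K V W : Type*} [Field K] [AddCommGroup V] [Module K V] [AddCommGroup W] [Module K W]

theorem inv_two_smul_add_self {K W : Type*} [DivisionRing K] [AddCommGroup W] [Module K W]
    (h2 : (2 : K) ≠ 0) (w : W) : (2 : K)⁻¹ • (w + w) = w := by
  rw [← two_smul K w, smul_smul, inv_mul_cancel₀ h2, one_smul]

theorem isAlt_compl₂_bracket {br : V →ₗ[K] V →ₗ[K] V} {c : V →ₗ[K] V →ₗ[K] W}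
    (h2 : (2 : K) ≠ 0) (hbr : br.IsAlt) (hsym : ∀ u v : V, c u v = c v u)
    (axc : ∀ u v : V, (2 : K)⁻¹ • (c u (br v v) + c (br v v) u)
            = (2 : K)⁻¹ • (c v (br u v) + c (br u v) v)) (u : V) :
    (c.compl₂ (br u)).IsAlt := by
  intro v
  have h := axc u v
  rw [hbr.self_eq_zero v, hsym (br u v) v, inv_two_smul_add_self h2] at h
  simpa using h.symm

end

theorem sela_lie_invariant_form_general
    {K : Type*} [Field K] (h2 : (2 : K) ≠ 0)
    {V W : Type*} [AddCommGroup V] [Module K V] [AddCommGroup W] [Module K W]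
    (br : V →ₗ[K] V →ₗ[K] V) (c : V →ₗ[K] V →ₗ[K] W)
    (axc : ∀ u v : V, (2 : K)⁻¹ • (c u (br v v) + c (br v v) u)
            = (2 : K)⁻¹ • (c v (br u v) + c (br u v) v))
    (hsym : ∀ u v : V, c u v = c v u)
    (hlie : ∀ v : V, br v v = 0) :
    ∀ v v' v'' : V, c v (br v' v'') = c (br v v') v'' := by
  intro v v' v''
  have hbr : br.IsAlt := hlie
  calc c v (br v' v'') = -c v'' (br v' v) :=
        ((isAlt_compl₂_bracket h2 hbr hsym axc v').neg v'' v).symm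
    _ = c v'' (br v v') := by rw [← hbr.neg v v', map_neg, neg_neg]
    _ = c (br v v') v'' := hsym _ _

/-- In a symmetric enhanced Leibniz algebra whose underlying Leibniz bracket is a
Lie bracket, the symmetric bilinear form `∘` is invariant. -/
theorem sela_lie_invariant_form
    {K : Type*} [Field K] (h2 : (2 : K) ≠ 0)
    {V W : Type*} [AddCommGroup V] [Module K V] [AddCommGroup W] [Module K W]
    (t : W →ₗ[K] V) (br : V →ₗ[K] V →ₗ[K] V) (c : V →ₗ[K] V →ₗ[K] W)
    (leib : ∀ v₁ v₂ v₃ : V, br v₁ (br v₂ v₃) = br (br v₁ v₂) v₃ + br v₂ (br v₁ v₃))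
    (axa : ∀ (w : W) (v : V), br (t w) v = 0)
    (axb : ∀ w : W, c (t w) (t w) = 0)
    (axc : ∀ u v : V, (2 : K)⁻¹ • (c u (br v v) + c (br v v) u)
            = (2 : K)⁻¹ • (c v (br u v) + c (br u v) v))
    (axd : ∀ v : V, br v v = t (c v v))
    (hsym : ∀ u v : V, c u v = c v u)
    (hlie : ∀ v : V, br v v = 0) :
    ∀ v v' v'' : V, c v (br v' v'') = c (br v v') v'' :=
  sela_lie_invariant_form_general h2 br c axc hsym hlie
end

section
/- Every left Leibniz algebra (V, [·,·]) is canonically a symmetric enhanced Leibniz algebra: taking W := Sq(V) (the span of the squares [v,v]), t : Sq(V) → V the inclusion, and u ∘ v := (1/2)([u,v] + [v,u]) ∈ Sq(V), the four axioms hold; explicitly, for all u, v, x ∈ V one has [[u,v] + [v,u], x] = 0 and [u,[v,v]] + [[v,v],u] = [v,[u,v]] + [[u,v],v]. -/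
/-!
Polarization writes `[u,v] + [v,u]` as `[u+v,u+v] - [u,u] - [v,v]`, so it lies in `Sq(V)`.
The Leibniz identity with `v₁ = v₂ = v` reads `[v,[v,x]] = [[v,v],x] + [v,[v,x]]`, so every
square is left central, hence so is `Sq(V)`, which is the span of the squares. The last identity is
the Leibniz identity for `u, v, v` once the left-central term `[[v,v],u]` is dropped.
-/

section LeftLeibniz

variable {R V : Type*} [CommRing R] [AddCommGroup V] [Module R V] (br : V →ₗ[R] V →ₗ[R] V)

theorem bracket_add_bracket_swap_eq (u v : V) :
    br u v + br v u = br (u + v) (u + v) - br u u - br v v := by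
  simp only [map_add, LinearMap.add_apply]
  abel

theorem bracket_add_bracket_swap_mem_span_squares (u v : V) :
    br u v + br v u ∈ Submodule.span R {x : V | ∃ v : V, x = br v v} := by
  have mem_span (w : V) : br w w ∈ Submodule.span R {x : V | ∃ v : V, x = br v v} :=
    Submodule.subset_span ⟨w, rfl⟩
  rw [bracket_add_bracket_swap_eq]
  exact Submodule.sub_mem _ (Submodule.sub_mem _ (mem_span _) (mem_span _)) (mem_span _)

variable {br}
variable (leib : ∀ v₁ v₂ v₃ : V, br v₁ (br v₂ v₃) = br (br v₁ v₂) v₃ + br v₂ (br v₁ v₃))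
include leib

theorem bracket_self_mem_ker (v : V) : br v v ∈ LinearMap.ker br :=
  LinearMap.ext fun x => (right_eq_add.mp (leib v v x) :)

theorem span_squares_le_ker : Submodule.span R {x : V | ∃ v : V, x = br v v} ≤ LinearMap.ker br :=
  Submodule.span_le.mpr fun _ ⟨v, hv⟩ => hv ▸ bracket_self_mem_ker leib v

theorem bracket_eq_zero_of_mem_span_squares {x : V}
    (hx : x ∈ Submodule.span R {x : V | ∃ v : V, x = br v v}) (y : V) : br x y = 0 := by
  rw [LinearMap.mem_ker.mp (span_squares_le_ker leib hx), LinearMap.zero_apply]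

theorem bracket_bracket_self_add_swap (u v : V) :
    br u (br v v) + br (br v v) u = br v (br u v) + br (br u v) v := by
  rw [LinearMap.mem_ker.mp (bracket_self_mem_ker leib v), LinearMap.zero_apply, add_zero,
    leib u v v, add_comm]

end LeftLeibniz

theorem leibniz_canonical_sELA_general
    {K : Type*} [Field K]
    {V : Type*} [AddCommGroup V] [Module K V]
    (br : V →ₗ[K] V →ₗ[K] V)
    (leib : ∀ v₁ v₂ v₃ : V, br v₁ (br v₂ v₃) = br (br v₁ v₂) v₃ + br v₂ (br v₁ v₃)) :
    (∀ u v : V, br u v + br v u ∈ Submodule.span K {x : V | ∃ v : V, x = br v v}) ∧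
    (∀ x ∈ Submodule.span K {x : V | ∃ v : V, x = br v v}, ∀ y : V, br x y = 0) ∧
    (∀ u v x : V, br (br u v + br v u) x = 0) ∧
    (∀ u v : V, br u (br v v) + br (br v v) u = br v (br u v) + br (br u v) v) :=
  ⟨bracket_add_bracket_swap_mem_span_squares br,
    fun _ hx => bracket_eq_zero_of_mem_span_squares leib hx,
    fun u v => bracket_eq_zero_of_mem_span_squares leib
      (bracket_add_bracket_swap_mem_span_squares br u v),
    bracket_bracket_self_add_swap leib⟩

/-- Every left Leibniz algebra is canonically a symmetric enhanced Leibniz algebra,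
with `W := Sq(V)`, `t` the inclusion, and `u ∘ v := (1/2)([u,v] + [v,u])`. -/
theorem leibniz_canonical_sELA
    {K : Type*} [Field K] (h2 : (2 : K) ≠ 0)
    {V : Type*} [AddCommGroup V] [Module K V]
    (br : V →ₗ[K] V →ₗ[K] V)
    (leib : ∀ v₁ v₂ v₃ : V, br v₁ (br v₂ v₃) = br (br v₁ v₂) v₃ + br v₂ (br v₁ v₃)) :
    (∀ u v : V, br u v + br v u ∈ Submodule.span K {x : V | ∃ v : V, x = br v v}) ∧
    (∀ x ∈ Submodule.span K {x : V | ∃ v : V, x = br v v}, ∀ y : V, br x y = 0) ∧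
    (∀ u v x : V, br (br u v + br v u) x = 0) ∧
    (∀ u v : V, br u (br v v) + br (br v v) u = br v (br u v) + br (br u v) v) :=
  leibniz_canonical_sELA_general br leib
end

section
/- β-transformation of an enhanced Leibniz algebra: if (t : W → V, [·,·], ∘) is an enhanced Leibniz algebra and β : V × V → W is an alternating bilinear map (β(v,v) = 0 for all v), then (t : W → V, [·,·], ∘') with u ∘' v := u ∘ v + β(u,v) is again an enhanced Leibniz algebra, i.e. satisfies axioms (a)–(d). -/
theorem LinearMap.IsAlt.add_apply_add_add_apply_swap {R M N : Type*} [CommSemiring R]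
    [AddCommMonoid M] [Module R M] [AddCommGroup N] [Module R N]
    {β : M →ₗ[R] M →ₗ[R] N} (hβ : β.IsAlt) (c : M →ₗ[R] M →ₗ[R] N) (u v : M) :
    (c u v + β u v) + (c v u + β v u) = c u v + c v u := by
  rw [← hβ.neg u v]
  abel

theorem ela_beta_transform_general
    {K : Type*} [Field K]
    {V W : Type*} [AddCommGroup V] [Module K V] [AddCommGroup W] [Module K W]
    (t : W →ₗ[K] V) (br : V →ₗ[K] V →ₗ[K] V) (c : V →ₗ[K] V →ₗ[K] W)
    (axa : ∀ (w : W) (v : V), br (t w) v = 0)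
    (axb : ∀ w : W, c (t w) (t w) = 0)
    (axc : ∀ u v : V, (2 : K)⁻¹ • (c u (br v v) + c (br v v) u)
            = (2 : K)⁻¹ • (c v (br u v) + c (br u v) v))
    (axd : ∀ v : V, br v v = t (c v v))
    (β : V →ₗ[K] V →ₗ[K] W) (halt : ∀ v : V, β v v = 0) :
    (∀ (w : W) (v : V), br (t w) v = 0) ∧
    (∀ w : W, c (t w) (t w) + β (t w) (t w) = 0) ∧
    (∀ u v : V,
        (2 : K)⁻¹ • ((c u (br v v) + β u (br v v)) + (c (br v v) u + β (br v v) u))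
          = (2 : K)⁻¹ • ((c v (br u v) + β v (br u v)) + (c (br u v) v + β (br u v) v))) ∧
    (∀ v : V, br v v = t (c v v + β v v)) := by
  have hβ : β.IsAlt := halt
  refine ⟨axa, fun w => by rw [axb, halt, add_zero], fun u v => ?_,
    fun v => by rw [halt, add_zero, axd]⟩
  rw [hβ.add_apply_add_add_apply_swap, hβ.add_apply_add_add_apply_swap]
  exact axc u v

/-- β-transformation of an enhanced Leibniz algebra: adding an alternating bilinear
map `β` to the circle product again yields an enhanced Leibniz algebra. -/
theorem ela_beta_transform
    {K : Type*} [Field K] (h2 : (2 : K) ≠ 0)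
    {V W : Type*} [AddCommGroup V] [Module K V] [AddCommGroup W] [Module K W]
    (t : W →ₗ[K] V) (br : V →ₗ[K] V →ₗ[K] V) (c : V →ₗ[K] V →ₗ[K] W)
    (leib : ∀ v₁ v₂ v₃ : V, br v₁ (br v₂ v₃) = br (br v₁ v₂) v₃ + br v₂ (br v₁ v₃))
    (axa : ∀ (w : W) (v : V), br (t w) v = 0)
    (axb : ∀ w : W, c (t w) (t w) = 0)
    (axc : ∀ u v : V, (2 : K)⁻¹ • (c u (br v v) + c (br v v) u)
            = (2 : K)⁻¹ • (c v (br u v) + c (br u v) v))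
    (axd : ∀ v : V, br v v = t (c v v))
    (β : V →ₗ[K] V →ₗ[K] W) (halt : ∀ v : V, β v v = 0) :
    (∀ (w : W) (v : V), br (t w) v = 0) ∧
    (∀ w : W, c (t w) (t w) + β (t w) (t w) = 0) ∧
    (∀ u v : V,
        (2 : K)⁻¹ • ((c u (br v v) + β u (br v v)) + (c (br v v) u + β (br v v) u))
          = (2 : K)⁻¹ • ((c v (br u v) + β v (br u v)) + (c (br u v) v + β (br u v) v))) ∧
    (∀ v : V, br v v = t (c v v + β v v)) :=
  ela_beta_transform_general t br c axa axb axc axd β halt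
end

section
/- The adjoint representation of an enhanced Leibniz algebra on W represents the bracket: defining ρ(u)·w := 2 (u ∘ˢ t(w)) for u ∈ V and w ∈ W, one has ρ(u)(ρ(v)·w) − ρ(v)(ρ(u)·w) = ρ([u,v])·w for all u, v ∈ V and w ∈ W. -/
/-- The adjoint action of an enhanced Leibniz algebra on `W`:
`ρ(u)·w := 2 (u ∘ˢ t(w))`. -/
def elaAdjW {K V W : Type*} [Field K] [AddCommGroup V] [Module K V]
    [AddCommGroup W] [Module K W]
    (t : W →ₗ[K] V) (c : V →ₗ[K] V →ₗ[K] W) (u : V) (w : W) : W :=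
  (2 : K) • ((2 : K)⁻¹ • (c u (t w) + c (t w) u))

/-!
Write `S(a, b) = c a b + c b a`, so that `ρ(u)·w = S(u, t w)`. Polarizing axiom (d) gives
`t (S(u, t w)) = [u, t w]`, hence the left side is `S(u, [v, x]) - S(v, [u, x])` with `x = t w`.
Since `x` is a left annihilator of the bracket, polarizing axiom (c) in its second variable at
`(v, x)` gives `S(u, [v, x]) = S(v, [u, x]) + S(x, [u, v]) + S(x, [u, x])`, and the last term
vanishes because `a ↦ S(x, [a, a]) = S(a, [x, a])` is identically zero.
-/

section

variable {K V W : Type*} [Field K] [AddCommGroup V] [Module K V] [AddCommGroup W] [Module K W]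
  {t : W →ₗ[K] V} {br : V →ₗ[K] V →ₗ[K] V} {c : V →ₗ[K] V →ₗ[K] W}

theorem elaAdjW_eq (h2 : (2 : K) ≠ 0) (u : V) (w : W) :
    elaAdjW t c u w = c u (t w) + c (t w) u := by
  rw [elaAdjW, smul_smul, mul_inv_cancel₀ h2, one_smul]

theorem map_add_flip_eq_bracket_of_leftAnnihilator (axd : ∀ v : V, br v v = t (c v v))
    {x : V} (hx : ∀ v, br x v = 0) (a : V) :
    t (c a x + c x a) = br a x := by
  have hAlt : (br - c.compr₂ t).IsAlt := fun v => by simp [axd]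
  have := hAlt.neg a x
  simp only [LinearMap.sub_apply, LinearMap.compr₂_apply, hx, neg_sub] at this
  rw [map_add]
  linear_combination (norm := abel) this

variable (axc : ∀ u v : V, c u (br v v) + c (br v v) u = c v (br u v) + c (br u v) v)
include axc

theorem symm_bracket_leftAnnihilator_eq_zero {x : V} (hx : ∀ v, br x v = 0) (a : V) :
    c x (br a x) + c (br a x) x = 0 := by
  have hAlt : (br.compr₂ (c x + c.flip x)).IsAlt := fun v => by
    simpa [hx] using axc x v
  have h := hAlt.neg a x
  simp only [LinearMap.compr₂_apply, hx, map_zero, LinearMap.add_apply, LinearMap.flip_apply] at h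
  linear_combination (norm := abel) -h

theorem symm_bracket_leftAnnihilator {x : V} (hx : ∀ v, br x v = 0) (u v : V) :
    c u (br v x) + c (br v x) u
      = c v (br u x) + c (br u x) v + (c (br u v) x + c x (br u v)) := by
  have hvx := axc u (v + x)
  simp only [map_add, LinearMap.add_apply, hx, add_zero] at hvx
  linear_combination (norm := abel)
    hvx - axc u v + symm_bracket_leftAnnihilator_eq_zero axc hx u

end

theorem ela_adjoint_represents_general
    {K : Type*} [Field K] (h2 : (2 : K) ≠ 0)
    {V W : Type*} [AddCommGroup V] [Module K V] [AddCommGroup W] [Module K W]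
    (t : W →ₗ[K] V) (br : V →ₗ[K] V →ₗ[K] V) (c : V →ₗ[K] V →ₗ[K] W)
    (axa : ∀ (w : W) (v : V), br (t w) v = 0)
    (axc : ∀ u v : V, (2 : K)⁻¹ • (c u (br v v) + c (br v v) u)
            = (2 : K)⁻¹ • (c v (br u v) + c (br u v) v))
    (axd : ∀ v : V, br v v = t (c v v)) :
    ∀ (u v : V) (w : W),
      elaAdjW t c u (elaAdjW t c v w) - elaAdjW t c v (elaAdjW t c u w)
        = elaAdjW t c (br u v) w := by
  intro u v w
  have axc' : ∀ a b : V, c a (br b b) + c (br b b) a = c b (br a b) + c (br a b) b :=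
    fun a b => smul_right_injective W (inv_ne_zero h2) (axc a b)
  simp only [elaAdjW_eq h2, map_add_flip_eq_bracket_of_leftAnnihilator axd (axa w)]
  linear_combination (norm := abel) symm_bracket_leftAnnihilator axc' (axa w) u v

/-- The adjoint representation of an enhanced Leibniz algebra on `W` represents the
bracket. -/
theorem ela_adjoint_represents
    {K : Type*} [Field K] (h2 : (2 : K) ≠ 0)
    {V W : Type*} [AddCommGroup V] [Module K V] [AddCommGroup W] [Module K W]
    (t : W →ₗ[K] V) (br : V →ₗ[K] V →ₗ[K] V) (c : V →ₗ[K] V →ₗ[K] W)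
    (leib : ∀ v₁ v₂ v₃ : V, br v₁ (br v₂ v₃) = br (br v₁ v₂) v₃ + br v₂ (br v₁ v₃))
    (axa : ∀ (w : W) (v : V), br (t w) v = 0)
    (axb : ∀ w : W, c (t w) (t w) = 0)
    (axc : ∀ u v : V, (2 : K)⁻¹ • (c u (br v v) + c (br v v) u)
            = (2 : K)⁻¹ • (c v (br u v) + c (br u v) v))
    (axd : ∀ v : V, br v v = t (c v v)) :
    ∀ (u v : V) (w : W),
      elaAdjW t c u (elaAdjW t c v w) - elaAdjW t c v (elaAdjW t c u w)
        = elaAdjW t c (br u v) w :=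
  ela_adjoint_represents_general h2 t br c axa axc axd
end

section
/- In a symmetric enhanced Leibniz algebra with injective t, the pair (V, im(t)) is a Leibniz couple, i.e. Sq(V) ⊆ im(t) ⊆ Z_L(V), and the circle product is uniquely determined by the bracket: t(v₁ ∘ v₂) = (1/2)([v₁,v₂] + [v₂,v₁]) for all v₁, v₂ ∈ V. -/
/-! Polarizing `[v,v] = t(v ∘ v)` at `u + v` gives `[u,v] + [v,u] = t(u ∘ v) + t(v ∘ u)`, which by
symmetry of `∘` is `2 t(u ∘ v)`; the two inclusions of the Leibniz couple are axioms (d) and (a). -/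

theorem LinearMap.add_flip_eq_of_diag_eq {R M N : Type*} [CommSemiring R]
    [AddCommGroup M] [Module R M] [AddCommGroup N] [Module R N]
    {f g : M →ₗ[R] M →ₗ[R] N} (hfg : ∀ v, f v v = g v v) (u v : M) :
    f u v + f v u = g u v + g v u := by
  have h := hfg (u + v)
  simp only [map_add, LinearMap.add_apply, hfg u, hfg v] at h
  linear_combination (norm := abel) h

theorem sela_injective_leibniz_couple_general
    {K : Type*} [Field K] (h2 : (2 : K) ≠ 0)
    {V W : Type*} [AddCommGroup V] [Module K V] [AddCommGroup W] [Module K W]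
    (t : W →ₗ[K] V) (br : V →ₗ[K] V →ₗ[K] V) (c : V →ₗ[K] V →ₗ[K] W)
    (axa : ∀ (w : W) (v : V), br (t w) v = 0)
    (axd : ∀ v : V, br v v = t (c v v))
    (hsym : ∀ u v : V, c u v = c v u) :
    (Submodule.span K {x : V | ∃ v : V, x = br v v} ≤ LinearMap.range t) ∧
    (∀ x ∈ LinearMap.range t, ∀ y : V, br x y = 0) ∧
    (∀ v₁ v₂ : V, t (c v₁ v₂) = (2 : K)⁻¹ • (br v₁ v₂ + br v₂ v₁)) := by
  refine ⟨?_, ?_, fun u v => ?_⟩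
  · rw [Submodule.span_le]
    rintro _ ⟨v, rfl⟩
    exact ⟨c v v, (axd v).symm⟩
  · rintro _ ⟨w, rfl⟩ y
    exact axa w y
  · have hpol := LinearMap.add_flip_eq_of_diag_eq (g := c.compr₂ t) axd u v
    rw [LinearMap.compr₂_apply, LinearMap.compr₂_apply, hsym v u, ← two_smul K] at hpol
    exact (eq_inv_smul_iff₀ h2).2 hpol.symm

/-- In a symmetric enhanced Leibniz algebra with injective `t`, the pair
`(V, im(t))` is a Leibniz couple and the circle product is determined by the
bracket. -/
theorem sela_injective_leibniz_couple
    {K : Type*} [Field K] (h2 : (2 : K) ≠ 0)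
    {V W : Type*} [AddCommGroup V] [Module K V] [AddCommGroup W] [Module K W]
    (t : W →ₗ[K] V) (br : V →ₗ[K] V →ₗ[K] V) (c : V →ₗ[K] V →ₗ[K] W)
    (leib : ∀ v₁ v₂ v₃ : V, br v₁ (br v₂ v₃) = br (br v₁ v₂) v₃ + br v₂ (br v₁ v₃))
    (axa : ∀ (w : W) (v : V), br (t w) v = 0)
    (axb : ∀ w : W, c (t w) (t w) = 0)
    (axc : ∀ u v : V, (2 : K)⁻¹ • (c u (br v v) + c (br v v) u)
            = (2 : K)⁻¹ • (c v (br u v) + c (br u v) v))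
    (axd : ∀ v : V, br v v = t (c v v))
    (hsym : ∀ u v : V, c u v = c v u)
    (hinj : Function.Injective t) :
    (Submodule.span K {x : V | ∃ v : V, x = br v v} ≤ LinearMap.range t) ∧
    (∀ x ∈ LinearMap.range t, ∀ y : V, br x y = 0) ∧
    (∀ v₁ v₂ : V, t (c v₁ v₂) = (2 : K)⁻¹ • (br v₁ v₂ + br v₂ v₁)) :=
  sela_injective_leibniz_couple_general h2 t br c axa axd hsym
end

section
/- Let (V, [·,·]) be a left Leibniz algebra, t : W → V a linear map such that Sq(V) ⊆ im(t) ⊆ Z_L(V), and σ : V → W a linear map (defined on im(t), extended linearly) such that t(σ(x)) = x for all x ∈ im(t). Then the product u ∘_σ v := (1/2) σ([u,v] + [v,u]) (well-defined since [u,v]+[v,u] ∈ Sq(V) ⊆ im(t)) turns (t : W → V, [·,·], ∘_σ) into a symmetric enhanced Leibniz algebra, i.e. ∘_σ is symmetric and axioms (a)–(d) hold. -/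
/-!
Polarization `[u,v] + [v,u] = [u+v,u+v] - [u,u] - [v,v]` puts every symmetrized bracket in
`im t`, so `∘_σ` is defined, and `t ∘ σ = id` there gives `t (u ∘_σ u) = [u,u]` once `2` is
invertible. Axiom (c) is the Leibniz identity `[v,[u,v]] = [[v,u],v] + [u,[v,v]]` combined with
`[[u,v],v] = -[[v,u],v]` and `[[v,v],u] = 0`, both because `im t` lies in the left centre.
-/

section LeibnizSplitting

variable {R M : Type*} [CommRing R] [AddCommGroup M] [Module R M]

theorem LinearMap.add_swap_eq_sub_sub {N : Type*} [AddCommGroup N] [Module R N]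
    (br : M →ₗ[R] M →ₗ[R] N) (u v : M) :
    br u v + br v u = br (u + v) (u + v) - br u u - br v v := by
  simp only [map_add, LinearMap.add_apply]
  abel

theorem LinearMap.add_swap_mem_of_forall_self_mem {N : Type*} [AddCommGroup N] [Module R N]
    (br : M →ₗ[R] M →ₗ[R] N) {S : Submodule R N} (hS : ∀ v, br v v ∈ S) (u v : M) :
    br u v + br v u ∈ S := by
  rw [br.add_swap_eq_sub_sub]
  exact sub_mem (sub_mem (hS _) (hS _)) (hS _)

theorem leibniz_add_swap_eq_of_squares_le_leftCenter (br : M →ₗ[R] M →ₗ[R] M)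
    (leib : ∀ v₁ v₂ v₃ : M, br v₁ (br v₂ v₃) = br (br v₁ v₂) v₃ + br v₂ (br v₁ v₃))
    {S : Submodule R M} (hS : ∀ v, br v v ∈ S) (hZ : ∀ x ∈ S, ∀ y : M, br x y = 0)
    (u v : M) :
    br u (br v v) + br (br v v) u = br v (br u v) + br (br u v) v := by
  have hsym : br (br u v) v = -br (br v u) v := by
    rw [eq_neg_iff_add_eq_zero, ← LinearMap.add_apply, ← map_add]
    exact hZ _ (br.add_swap_mem_of_forall_self_mem hS u v) v
  rw [hZ _ (hS v) u, leib v u v, hsym]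
  abel

end LeibnizSplitting

theorem apply_inv_two_smul_splitting_add_self {K V W : Type*} [Field K] (h2 : (2 : K) ≠ 0)
    [AddCommGroup V] [Module K V] [AddCommGroup W] [Module K W]
    {t : W →ₗ[K] V} {σ : V →ₗ[K] W} {x : V} (hσ : t (σ x) = x) :
    t ((2 : K)⁻¹ • σ (x + x)) = x := by
  rw [map_smul, map_add, map_add, hσ, ← two_smul K x, smul_smul, inv_mul_cancel₀ h2, one_smul]

/-- Given a Leibniz algebra `V`, `t : W → V` with `Sq(V) ⊆ im(t) ⊆ Z_L(V)`, and a
splitting `σ` of `t` over `im(t)`, the product `u ∘_σ v := (1/2)σ([u,v]+[v,u])`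
turns the data into a symmetric enhanced Leibniz algebra. -/
theorem sela_from_splitting
    {K : Type*} [Field K] (h2 : (2 : K) ≠ 0)
    {V W : Type*} [AddCommGroup V] [Module K V] [AddCommGroup W] [Module K W]
    (t : W →ₗ[K] V) (br : V →ₗ[K] V →ₗ[K] V)
    (leib : ∀ v₁ v₂ v₃ : V, br v₁ (br v₂ v₃) = br (br v₁ v₂) v₃ + br v₂ (br v₁ v₃))
    (hSq : Submodule.span K {x : V | ∃ v : V, x = br v v} ≤ LinearMap.range t)
    (hZ : ∀ x ∈ LinearMap.range t, ∀ y : V, br x y = 0)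
    (σ : V →ₗ[K] W) (hσ : ∀ x ∈ LinearMap.range t, t (σ x) = x) :
    (∀ u v : V, (2 : K)⁻¹ • σ (br u v + br v u) = (2 : K)⁻¹ • σ (br v u + br u v)) ∧
    (∀ (w : W) (v : V), br (t w) v = 0) ∧
    (∀ w : W, (2 : K)⁻¹ • σ (br (t w) (t w) + br (t w) (t w)) = 0) ∧
    (∀ u v : V, (2 : K)⁻¹ • σ (br u (br v v) + br (br v v) u)
        = (2 : K)⁻¹ • σ (br v (br u v) + br (br u v) v)) ∧
    (∀ v : V, br v v = t ((2 : K)⁻¹ • σ (br v v + br v v))) := by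
  have hsq : ∀ v, br v v ∈ LinearMap.range t := fun v => hSq (Submodule.subset_span ⟨v, rfl⟩)
  have hZt : ∀ (w : W) (v : V), br (t w) v = 0 := fun w => hZ _ ⟨w, rfl⟩
  refine ⟨fun u v => by rw [add_comm (br u v)], hZt, fun w => by simp [hZt], fun u v => ?_,
    fun v => (apply_inv_two_smul_splitting_add_self h2 (hσ _ (hsq v))).symm⟩
  rw [leibniz_add_swap_eq_of_squares_le_leftCenter br leib hsq hZ]
end

section
/- The coboundary operator d of the short complex associated to a Leibniz algebra squares to zero: for any left Leibniz algebra (V,[·,·]), vector space U, and linear map δ : V → U, defining (dδ)(u,v) := (1/2)δ([u,v]) + (1/2)δ([v,u]) (a symmetric bilinear form) and, for a symmetric bilinear Δ : V × V → U, (dΔ)(v₀,v₁,v₂) := Δ([v₀,v₁],v₂) + Δ(v₁,[v₀,v₂]) − Δ(v₀,[v₁,v₂]) − Δ(v₀,[v₂,v₁]), one has d(dδ) = 0, i.e. (d(dδ))(v₀,v₁,v₂) = 0 for all v₀, v₁, v₂ ∈ V. -/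
/-!
Expanding `[v₀, [v₁, v₂]]` and `[v₀, [v₂, v₁]]` by the Leibniz identity, `d` applied to the
`V`-valued symmetrised bracket `(u, v) ↦ [u, v] + [v, u]` reduces to `[[v₁, v₂], v₀] + [[v₂, v₁], v₀]`,
which vanishes because the Leibniz identity makes left multiplication by any `[a, b] + [b, a]` zero.
Since `dδ` is this symmetrised bracket followed by the linear map `2⁻¹ • δ`, and `d` commutes with
post-composition by additive maps, `d(dδ) = 0`.
-/

namespace LeibnizComplex

section Bracket

variable {R V : Type*} [CommSemiring R] [AddCommGroup V] [Module R V]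

def IsLeftLeibniz (br : V →ₗ[R] V →ₗ[R] V) : Prop :=
  ∀ a b c : V, br a (br b c) = br (br a b) c + br b (br a c)

theorem IsLeftLeibniz.bracket_bracket_add_bracket_bracket_swap {br : V →ₗ[R] V →ₗ[R] V}
    (leib : IsLeftLeibniz br) (a b c : V) : br (br a b) c + br (br b a) c = 0 := by
  have hab := leib a b c
  have hba := leib b a c
  rw [← sub_eq_iff_eq_add] at hab hba
  rw [← hab, ← hba]
  abel

end Bracket

section Coboundary

variable {R V U : Type*} [CommSemiring R] [AddCommGroup V] [Module R V] [AddCommGroup U]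

def d₂ (br : V →ₗ[R] V →ₗ[R] V) (Δ : V → V → U) (v₀ v₁ v₂ : V) : U :=
  Δ (br v₀ v₁) v₂ + Δ v₁ (br v₀ v₂) - Δ v₀ (br v₁ v₂) - Δ v₀ (br v₂ v₁)

theorem d₂_comp_addMonoidHom {W : Type*} [AddCommGroup W] (br : V →ₗ[R] V →ₗ[R] V)
    (f : U →+ W) (Δ : V → V → U) (v₀ v₁ v₂ : V) :
    d₂ br (fun u v => f (Δ u v)) v₀ v₁ v₂ = f (d₂ br Δ v₀ v₁ v₂) := by
  simp only [d₂, map_add, map_sub]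

theorem d₂_symmBracket_eq_zero {br : V →ₗ[R] V →ₗ[R] V} (leib : IsLeftLeibniz br)
    (v₀ v₁ v₂ : V) : d₂ br (fun u v => br u v + br v u) v₀ v₁ v₂ = 0 := by
  have hswap : br (br v₂ v₁) v₀ = -br (br v₁ v₂) v₀ :=
    eq_neg_of_add_eq_zero_left (leib.bracket_bracket_add_bracket_bracket_swap v₂ v₁ v₀)
  rw [d₂, leib v₀ v₁ v₂, leib v₀ v₂ v₁, hswap]
  abel

end Coboundary

variable {K V U : Type*} [Field K] [AddCommGroup V] [Module K V] [AddCommGroup U] [Module K U]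

def d₁ (br : V →ₗ[K] V →ₗ[K] V) (δ : V →ₗ[K] U) (u v : V) : U :=
  (2 : K)⁻¹ • (δ (br u v) + δ (br v u))

theorem d₂_d₁_eq_zero {br : V →ₗ[K] V →ₗ[K] V} (leib : IsLeftLeibniz br) (δ : V →ₗ[K] U)
    (v₀ v₁ v₂ : V) : d₂ br (d₁ br δ) v₀ v₁ v₂ = 0 := by
  have hd₁ : d₁ br δ = fun u v => ((2 : K)⁻¹ • δ).toAddMonoidHom (br u v + br v u) := by
    ext u v
    simp only [d₁, LinearMap.toAddMonoidHom_coe, LinearMap.smul_apply, map_add, smul_add]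
  rw [hd₁, d₂_comp_addMonoidHom, d₂_symmBracket_eq_zero leib, map_zero]

end LeibnizComplex

open LeibnizComplex in
theorem leibniz_d_squared_zero_general
    {K : Type*} [Field K]
    {V U : Type*} [AddCommGroup V] [Module K V] [AddCommGroup U] [Module K U]
    (br : V →ₗ[K] V →ₗ[K] V)
    (leib : ∀ v₁ v₂ v₃ : V, br v₁ (br v₂ v₃) = br (br v₁ v₂) v₃ + br v₂ (br v₁ v₃))
    (δ : V →ₗ[K] U) :
    ∀ v₀ v₁ v₂ : V,
      ((2 : K)⁻¹ • (δ (br (br v₀ v₁) v₂) + δ (br v₂ (br v₀ v₁))))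
      + ((2 : K)⁻¹ • (δ (br v₁ (br v₀ v₂)) + δ (br (br v₀ v₂) v₁)))
      - ((2 : K)⁻¹ • (δ (br v₀ (br v₁ v₂)) + δ (br (br v₁ v₂) v₀)))
      - ((2 : K)⁻¹ • (δ (br v₀ (br v₂ v₁)) + δ (br (br v₂ v₁) v₀))) = 0 :=
  d₂_d₁_eq_zero (br := br) leib δ

/-- The coboundary operator `d` of the short complex associated to a Leibniz
algebra squares to zero: `d(dδ) = 0` for every linear map `δ : V → U`. -/
theorem leibniz_d_squared_zero
    {K : Type*} [Field K] (h2 : (2 : K) ≠ 0)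
    {V U : Type*} [AddCommGroup V] [Module K V] [AddCommGroup U] [Module K U]
    (br : V →ₗ[K] V →ₗ[K] V)
    (leib : ∀ v₁ v₂ v₃ : V, br v₁ (br v₂ v₃) = br (br v₁ v₂) v₃ + br v₂ (br v₁ v₃))
    (δ : V →ₗ[K] U) :
    ∀ v₀ v₁ v₂ : V,
      ((2 : K)⁻¹ • (δ (br (br v₀ v₁) v₂) + δ (br v₂ (br v₀ v₁))))
      + ((2 : K)⁻¹ • (δ (br v₁ (br v₀ v₂)) + δ (br (br v₀ v₂) v₁)))
      - ((2 : K)⁻¹ • (δ (br v₀ (br v₁ v₂)) + δ (br (br v₁ v₂) v₀)))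
      - ((2 : K)⁻¹ • (δ (br v₀ (br v₂ v₁)) + δ (br (br v₂ v₁) v₀))) = 0 :=
  leibniz_d_squared_zero_general br leib δ
end

section
/- Equivariance of t in an enhanced Leibniz algebra: with v ∗ w := t(w) ∘ v and {v₁,v₂} := [v₁,v₂] − t(v₁ ∘ v₂), one has t(v ∗ w) = {v, t(w)} for all v ∈ V and w ∈ W, i.e. t(t(w) ∘ v) = [v, t(w)] − t(v ∘ t(w)); moreover the second Peiffer relation t(h) ∗ k = −t(k) ∗ h holds for all h, k ∈ W. -/
/-!
Both identities are polarizations. Polarizing `[v,v] = t(v ∘ v)` at `u = t(w)` and using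
`[t(w), v] = 0` gives `[v, t(w)] = t(v ∘ t(w) + t(w) ∘ v)`, which is equivariance. Polarizing
`t(w) ∘ t(w) = 0` says that `∘` is alternating on the image of `t`, which is the Peiffer relation.
-/

namespace LinearMap

variable {R M N P : Type*} [CommSemiring R] [AddCommMonoid M] [Module R M]
  [AddCommGroup N] [Module R N] [AddCommMonoid P] [Module R P]

theorem add_swap_eq_of_apply_self_eq (B : M →ₗ[R] M →ₗ[R] N) (C : M →ₗ[R] M →ₗ[R] P)
    (t : P →ₗ[R] N) (hBC : ∀ x, B x x = t (C x x)) (x y : M) :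
    B x y + B y x = t (C x y + C y x) := by
  have h := hBC (x + y)
  simp only [map_add, add_apply, hBC x, hBC y] at h
  rw [map_add]
  linear_combination (norm := module) h

end LinearMap

theorem ela_equivariance_and_peiffer_general
    {K : Type*} [Field K]
    {V W : Type*} [AddCommGroup V] [Module K V] [AddCommGroup W] [Module K W]
    (t : W →ₗ[K] V) (br : V →ₗ[K] V →ₗ[K] V) (c : V →ₗ[K] V →ₗ[K] W)
    (axa : ∀ (w : W) (v : V), br (t w) v = 0)
    (axb : ∀ w : W, c (t w) (t w) = 0)
    (axd : ∀ v : V, br v v = t (c v v)) :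
    (∀ (v : V) (w : W), t (c (t w) v) = br v (t w) - t (c v (t w))) ∧
    (∀ h k : W, c (t k) (t h) = - c (t h) (t k)) := by
  refine ⟨fun v w => ?_, fun h k => ?_⟩
  · have polar := br.add_swap_eq_of_apply_self_eq c t axd v (t w)
    rw [axa, add_zero, map_add] at polar
    rw [polar, add_sub_cancel_left]
  · have alt : (c.compl₁₂ t t).IsAlt := axb
    exact (alt.neg h k).symm

/-- Equivariance of `t` and the second Peiffer relation in an enhanced Leibniz
algebra: with `v ∗ w := t(w) ∘ v` and `{v₁,v₂} := [v₁,v₂] − t(v₁ ∘ v₂)`, one has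
`t(v ∗ w) = {v, t(w)}` and `t(h) ∗ k = −t(k) ∗ h`. -/
theorem ela_equivariance_and_peiffer
    {K : Type*} [Field K] (h2 : (2 : K) ≠ 0)
    {V W : Type*} [AddCommGroup V] [Module K V] [AddCommGroup W] [Module K W]
    (t : W →ₗ[K] V) (br : V →ₗ[K] V →ₗ[K] V) (c : V →ₗ[K] V →ₗ[K] W)
    (leib : ∀ v₁ v₂ v₃ : V, br v₁ (br v₂ v₃) = br (br v₁ v₂) v₃ + br v₂ (br v₁ v₃))
    (axa : ∀ (w : W) (v : V), br (t w) v = 0)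
    (axb : ∀ w : W, c (t w) (t w) = 0)
    (axc : ∀ u v : V, (2 : K)⁻¹ • (c u (br v v) + c (br v v) u)
            = (2 : K)⁻¹ • (c v (br u v) + c (br u v) v))
    (axd : ∀ v : V, br v v = t (c v v)) :
    (∀ (v : V) (w : W), t (c (t w) v) = br v (t w) - t (c v (t w))) ∧
    (∀ h k : W, c (t k) (t h) = - c (t h) (t k)) :=
  ela_equivariance_and_peiffer_general t br c axa axb axd
end
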